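/- Let f* : X → ℝ^k be a global minimizer of the population spectral contrastive loss L over all functions X → ℝ^k. Then Σ_{x∈X} w_x·‖f*(x)‖₂² ≤ k; equivalently, E_{x̄∼P, x∼A(·|x̄)}[‖f*(x)‖₂²] ≤ k. -/
import Mathlib


open Finset

noncomputable def wgt {Xb X : Type} [Fintype Xb] (P : Xb → ℝ) (Aug : Xb → X → ℝ)
    (x x' : X) : ℝ :=
  ∑ xb, P xb * (Aug xb x * Aug xb x')

noncomputable def wdeg {Xb X : Type} [Fintype Xb] [Fintype X] (P : Xb → ℝ)
    (Aug : Xb → X → ℝ) (x : X) : ℝ :=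
  ∑ x', wgt P Aug x x'

noncomputable def specLoss {Xb X : Type} [Fintype Xb] [Fintype X] {k : ℕ}
    (P : Xb → ℝ) (Aug : Xb → X → ℝ) (f : X → Fin k → ℝ) : ℝ :=
  -2 * ∑ x, ∑ x', wgt P Aug x x' * (∑ i, f x i * f x' i)
    + ∑ x, ∑ x', wdeg P Aug x * wdeg P Aug x' * (∑ i, f x i * f x' i) ^ 2

/-- Auxiliary: exchange of summation turning the quartic term into a sum of squares. -/
lemma sum_exch {X I : Type} [Fintype X] [Fintype I] (A : X → I → I → ℝ) :
    ∑ x, ∑ x', ∑ i, ∑ j, A x i j * A x' i j = ∑ i : I, ∑ j : I, (∑ x, A x i j) ^ 2 := by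
  have h1 : ∀ i j : I, (∑ x, A x i j) ^ 2 = ∑ x, ∑ x', A x i j * A x' i j := by
    intro i j
    rw [sq, Finset.sum_mul_sum]
  calc ∑ x, ∑ x', ∑ i, ∑ j, A x i j * A x' i j
      = ∑ x, ∑ i, ∑ x', ∑ j, A x i j * A x' i j :=
        Finset.sum_congr rfl fun x _ => Finset.sum_comm
    _ = ∑ x, ∑ i, ∑ j, ∑ x', A x i j * A x' i j :=
        Finset.sum_congr rfl fun x _ => Finset.sum_congr rfl fun i _ => Finset.sum_comm
    _ = ∑ i, ∑ x, ∑ j, ∑ x', A x i j * A x' i j := Finset.sum_comm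
    _ = ∑ i, ∑ j, ∑ x, ∑ x', A x i j * A x' i j :=
        Finset.sum_congr rfl fun i _ => Finset.sum_comm
    _ = ∑ i, ∑ j, (∑ x, A x i j) ^ 2 :=
        Finset.sum_congr rfl fun i _ => Finset.sum_congr rfl fun j _ => (h1 i j).symm

/-- **Lemma (expected norm of the learned representations):** any global
minimizer `f*` of the population spectral contrastive loss satisfies
`Σ_x w_x‖f*(x)‖² ≤ k`, equivalently `E_{x̄∼P, x∼A(·|x̄)}[‖f*(x)‖²] ≤ k`. -/
theorem stmt10 (Xb X : Type) [Fintype Xb] [Fintype X] (k : ℕ)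
    (P : Xb → ℝ) (Aug : Xb → X → ℝ)
    (hP : ∀ xb, 0 ≤ P xb) (hPsum : ∑ xb, P xb = 1)
    (hAug : ∀ xb x, 0 ≤ Aug xb x) (hAugsum : ∀ xb, ∑ x, Aug xb x = 1)
    (hdeg : ∀ x, 0 < wdeg P Aug x)
    (fstar : X → Fin k → ℝ)
    (hmin : ∀ f : X → Fin k → ℝ, specLoss P Aug fstar ≤ specLoss P Aug f) :
    (∑ x, wdeg P Aug x * (∑ i, fstar x i ^ 2)) ≤ k ∧
    (∑ xb, ∑ x, P xb * Aug xb x * (∑ i, fstar x i ^ 2)) ≤ k := by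
  classical
  set T : ℝ := ∑ x, ∑ x', wgt P Aug x x' * (∑ i, fstar x i * fstar x' i) with hTdef
  set Q : ℝ := ∑ x, ∑ x', wdeg P Aug x * wdeg P Aug x' * (∑ i, fstar x i * fstar x' i) ^ 2
    with hQdef
  set S : ℝ := ∑ x, wdeg P Aug x * (∑ i, fstar x i ^ 2) with hSdef
  have hwnn : ∀ x x' : X, 0 ≤ wgt P Aug x x' := fun x x' =>
    Finset.sum_nonneg fun xb _ => mul_nonneg (hP xb) (mul_nonneg (hAug xb x) (hAug xb x'))
  have hwsymm : ∀ x x' : X, wgt P Aug x x' = wgt P Aug x' x := fun x x' =>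
    Finset.sum_congr rfl fun xb _ => by ring
  have hdmarg : ∀ x : X, wdeg P Aug x = ∑ xb, P xb * Aug xb x := by
    intro x
    simp only [wdeg, wgt]
    rw [Finset.sum_comm]
    refine Finset.sum_congr rfl fun xb _ => ?_
    have : ∀ x' : X, P xb * (Aug xb x * Aug xb x') = (P xb * Aug xb x) * Aug xb x' :=
      fun x' => by ring
    simp only [this]
    rw [← Finset.mul_sum, hAugsum, mul_one]
  have hloss : ∀ g : X → Fin k → ℝ, specLoss P Aug g =
      -2 * (∑ x, ∑ x', wgt P Aug x x' * (∑ i, g x i * g x' i))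
      + ∑ x, ∑ x', wdeg P Aug x * wdeg P Aug x' * (∑ i, g x i * g x' i) ^ 2 := fun g => rfl
  -- Scaling inequality from minimality
  have hscale : ∀ c : ℝ, -2 * T + Q ≤ -2 * (c ^ 2 * T) + c ^ 4 * Q := by
    intro c
    have h1 := hmin fun x i => c * fstar x i
    rw [hloss fstar, hloss fun x i => c * fstar x i] at h1
    have hI : ∀ x x' : X, (∑ i, (c * fstar x i) * (c * fstar x' i))
        = c ^ 2 * ∑ i, fstar x i * fstar x' i := by
      intro x x'
      rw [Finset.mul_sum]
      exact Finset.sum_congr rfl fun i _ => by ring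
    simp only [hI] at h1
    have e1 : (∑ x, ∑ x', wgt P Aug x x' * (c ^ 2 * ∑ i, fstar x i * fstar x' i))
        = c ^ 2 * T := by
      rw [hTdef, Finset.mul_sum]
      refine Finset.sum_congr rfl fun x _ => ?_
      rw [Finset.mul_sum]
      exact Finset.sum_congr rfl fun x' _ => by ring
    have e2 : (∑ x, ∑ x', wdeg P Aug x * wdeg P Aug x'
          * (c ^ 2 * ∑ i, fstar x i * fstar x' i) ^ 2) = c ^ 4 * Q := by
      rw [hQdef, Finset.mul_sum]
      refine Finset.sum_congr rfl fun x _ => ?_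
      rw [Finset.mul_sum]
      exact Finset.sum_congr rfl fun x' _ => by ring
    rw [e1, e2] at h1
    rw [← hTdef, ← hQdef] at h1
    linarith
  have hQ0 : 0 ≤ Q := by
    rw [hQdef]
    exact Finset.sum_nonneg fun x _ => Finset.sum_nonneg fun x' _ =>
      mul_nonneg (mul_nonneg (hdeg x).le (hdeg x').le) (sq_nonneg _)
  have h0 : -2 * T + Q ≤ 0 := by have := hscale 0; norm_num at this; linarith
  have hT0 : 0 ≤ T := by linarith
  -- Stationarity: Q ≤ T
  have hQT : Q ≤ T := by
    rcases eq_or_lt_of_le hQ0 with h | hQpos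
    · linarith [h.symm]
    · have hr : (0:ℝ) ≤ T / Q := div_nonneg hT0 hQpos.le
      have hc := hscale (Real.sqrt (T / Q))
      rw [show Real.sqrt (T / Q) ^ 4 = (Real.sqrt (T / Q) ^ 2) ^ 2 by ring,
        Real.sq_sqrt hr] at hc
      have hQne : Q ≠ 0 := ne_of_gt hQpos
      have hc2 : (-2 * T + Q) * Q ≤ (-2 * (T / Q * T) + (T / Q) ^ 2 * Q) * Q :=
        mul_le_mul_of_nonneg_right hc hQpos.le
      have hrh : (-2 * (T / Q * T) + (T / Q) ^ 2 * Q) * Q = -(T ^ 2) := by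
        field_simp
        ring
      rw [hrh] at hc2
      nlinarith [hc2, sq_nonneg (T - Q)]
  -- AM-GM: T ≤ S
  have hTS : T ≤ S := by
    have step : ∀ x x' : X, wgt P Aug x x' * (∑ i, fstar x i * fstar x' i)
        ≤ wgt P Aug x x' * (((∑ i, fstar x i ^ 2) + ∑ i, fstar x' i ^ 2) / 2) := by
      intro x x'
      refine mul_le_mul_of_nonneg_left ?_ (hwnn x x')
      have h1 : (∑ i, fstar x i * fstar x' i)
          ≤ ∑ i, (fstar x i ^ 2 + fstar x' i ^ 2) / 2 :=
        Finset.sum_le_sum fun i _ => by nlinarith [sq_nonneg (fstar x i - fstar x' i)]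
      calc (∑ i, fstar x i * fstar x' i) ≤ ∑ i, (fstar x i ^ 2 + fstar x' i ^ 2) / 2 := h1
        _ = ((∑ i, fstar x i ^ 2) + ∑ i, fstar x' i ^ 2) / 2 := by
            rw [← Finset.sum_div, Finset.sum_add_distrib]
    have hbound : T ≤ ∑ x, ∑ x', wgt P Aug x x'
        * (((∑ i, fstar x i ^ 2) + ∑ i, fstar x' i ^ 2) / 2) := by
      rw [hTdef]
      exact Finset.sum_le_sum fun x _ => Finset.sum_le_sum fun x' _ => step x x'
    have split : ∀ x x' : X, wgt P Aug x x'
          * (((∑ i, fstar x i ^ 2) + ∑ i, fstar x' i ^ 2) / 2)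
        = wgt P Aug x x' * (∑ i, fstar x i ^ 2) / 2
          + wgt P Aug x x' * (∑ i, fstar x' i ^ 2) / 2 := fun x x' => by ring
    have p1 : (∑ x, ∑ x', wgt P Aug x x' * (∑ i, fstar x i ^ 2) / 2) = S / 2 := by
      rw [hSdef, Finset.sum_div]
      refine Finset.sum_congr rfl fun x _ => ?_
      rw [← Finset.sum_div, ← Finset.sum_mul, wdeg]
    have p2 : (∑ x, ∑ x', wgt P Aug x x' * (∑ i, fstar x' i ^ 2) / 2) = S / 2 := by
      rw [Finset.sum_comm, hSdef, Finset.sum_div]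
      refine Finset.sum_congr rfl fun x' _ => ?_
      rw [← Finset.sum_div, ← Finset.sum_mul]
      have : (∑ x, wgt P Aug x x') = wdeg P Aug x' := by
        rw [wdeg]
        exact Finset.sum_congr rfl fun x _ => hwsymm x x'
      rw [this]
    calc T ≤ ∑ x, ∑ x', wgt P Aug x x'
        * (((∑ i, fstar x i ^ 2) + ∑ i, fstar x' i ^ 2) / 2) := hbound
      _ = (∑ x, ∑ x', wgt P Aug x x' * (∑ i, fstar x i ^ 2) / 2)
          + ∑ x, ∑ x', wgt P Aug x x' * (∑ i, fstar x' i ^ 2) / 2 := by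
            simp only [split, Finset.sum_add_distrib]
      _ = S / 2 + S / 2 := by rw [p1, p2]
      _ = S := by ring
  -- Gram matrix and Cauchy–Schwarz: S^2 ≤ k * Q
  have hS0 : 0 ≤ S := by
    rw [hSdef]
    exact Finset.sum_nonneg fun x _ =>
      mul_nonneg (hdeg x).le (Finset.sum_nonneg fun i _ => sq_nonneg _)
  set G : Fin k → Fin k → ℝ := fun i j => ∑ x, wdeg P Aug x * (fstar x i * fstar x j)
    with hGdef
  have hSG : S = ∑ i, G i i := by
    rw [hSdef]
    have e : ∀ x : X, wdeg P Aug x * (∑ i, fstar x i ^ 2)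
        = ∑ i, wdeg P Aug x * (fstar x i * fstar x i) := by
      intro x
      rw [Finset.mul_sum]
      exact Finset.sum_congr rfl fun i _ => by ring
    simp only [e, hGdef]
    exact Finset.sum_comm
  have key : ∀ x x' : X, wdeg P Aug x * wdeg P Aug x' * (∑ i, fstar x i * fstar x' i) ^ 2
      = ∑ i, ∑ j, (wdeg P Aug x * (fstar x i * fstar x j))
        * (wdeg P Aug x' * (fstar x' i * fstar x' j)) := by
    intro x x'
    rw [sq, Finset.sum_mul_sum, Finset.mul_sum]
    refine Finset.sum_congr rfl fun i _ => ?_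
    rw [Finset.mul_sum]
    exact Finset.sum_congr rfl fun j _ => by ring
  have hQG : Q = ∑ i, ∑ j, G i j ^ 2 := by
    rw [hQdef]
    simp only [key, hGdef]
    exact sum_exch fun x i j => wdeg P Aug x * (fstar x i * fstar x j)
  have hdiag : (∑ i, G i i ^ 2) ≤ ∑ i, ∑ j, G i j ^ 2 :=
    Finset.sum_le_sum fun i _ =>
      Finset.single_le_sum (fun j _ => sq_nonneg (G i j)) (Finset.mem_univ i)
  have hCS : S ^ 2 ≤ (k : ℝ) * ∑ i, G i i ^ 2 := by
    rw [hSG]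
    have h := sq_sum_le_card_mul_sum_sq (s := (Finset.univ : Finset (Fin k)))
      (f := fun i => G i i)
    simpa using h
  have hSQ : S ^ 2 ≤ (k : ℝ) * Q := by
    rw [hQG]
    calc S ^ 2 ≤ (k : ℝ) * ∑ i, G i i ^ 2 := hCS
      _ ≤ (k : ℝ) * ∑ i, ∑ j, G i j ^ 2 :=
        mul_le_mul_of_nonneg_left hdiag (Nat.cast_nonneg k)
  -- Conclude S ≤ k
  have hSk : S ≤ (k : ℝ) := by
    have hkS : S ^ 2 ≤ (k : ℝ) * S := by
      calc S ^ 2 ≤ (k : ℝ) * Q := hSQ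
        _ ≤ (k : ℝ) * T := mul_le_mul_of_nonneg_left hQT (Nat.cast_nonneg k)
        _ ≤ (k : ℝ) * S := mul_le_mul_of_nonneg_left hTS (Nat.cast_nonneg k)
    nlinarith [hS0, hkS, (Nat.cast_nonneg k : (0:ℝ) ≤ (k:ℝ))]
  have hswap : (∑ xb, ∑ x, P xb * Aug xb x * (∑ i, fstar x i ^ 2)) = S := by
    rw [hSdef, Finset.sum_comm]
    refine Finset.sum_congr rfl fun x _ => ?_
    rw [← Finset.sum_mul, ← hdmarg x]
  exact ⟨hSk, by rw [hswap]; exact hSk⟩
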